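/- arXiv:1507.02359 — 2 statements merged into one kernel-verified Lean document; each statement's English description precedes it below -/
import Mathlib

section
/- Let T > 0 and let η : [0,T] → ℝ be continuous. If ∫₀ᵀ (s+1)^t η(s) ds = 0 for every real number t ≥ T, then η(s) = 0 for all s ∈ [0,T]. -/
/-!
Multiplying by `(s+1)^T` turns the hypothesis into the vanishing of all moments
`∫₀ᵀ (s+1)^n g(s) ds`, `n ∈ ℕ`, of the continuous function `g(s) = (s+1)^T η(s)`,
hence of `∫₀ᵀ p(s) g(s) ds` for every polynomial `p`. By Weierstrass approximation
`∫₀ᵀ g² = 0`, so `g` vanishes on `[0, T]`, and so does `η` because `(s+1)^T > 0`.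
-/

open MeasureTheory Polynomial Set

theorem integral_polynomial_mul_eq_zero_of_forall_integral_add_pow_mul_eq_zero {a b c : ℝ}
    {g : ℝ → ℝ} (hg : IntervalIntegrable g volume a b)
    (h : ∀ n : ℕ, ∫ x in a..b, (x + c) ^ n * g x = 0) (p : ℝ[X]) :
    ∫ x in a..b, p.eval x * g x = 0 := by
  set q := p.comp (X - C c)
  have hp : ∀ x, p.eval x =
      ∑ i ∈ Finset.range (q.natDegree + 1), q.coeff i * (x + c) ^ i := by
    intro x
    rw [← eval_eq_sum_range]
    simp [q, eval_comp]
  simp_rw [hp, Finset.sum_mul, mul_assoc]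
  rw [intervalIntegral.integral_finsetSum fun i _ =>
    (hg.continuousOn_mul (by fun_prop)).const_mul _]
  exact Finset.sum_eq_zero fun i _ => by rw [intervalIntegral.integral_const_mul, h i, mul_zero]

theorem integral_mul_self_eq_zero_of_forall_integral_polynomial_mul_eq_zero {a b : ℝ}
    (hab : a ≤ b) {g : ℝ → ℝ} (hg : ContinuousOn g (Icc a b))
    (h : ∀ p : ℝ[X], ∫ x in a..b, p.eval x * g x = 0) :
    ∫ x in a..b, g x * g x = 0 := by
  obtain ⟨M, hM⟩ := isCompact_Icc.exists_bound_of_continuousOn hg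
  have hM0 : 0 ≤ M := (norm_nonneg _).trans (hM a (left_mem_Icc.2 hab))
  have hC : 0 < M * (b - a) + 1 :=
    add_pos_of_nonneg_of_pos (mul_nonneg hM0 (sub_nonneg.2 hab)) one_pos
  refine eq_of_forall_dist_le fun ε hε => ?_
  set δ := ε / (M * (b - a) + 1)
  obtain ⟨p, hp⟩ := exists_polynomial_near_of_continuousOn a b g hg δ (by positivity)
  have hsplit : ∫ x in a..b, g x * g x = ∫ x in a..b, (g x - p.eval x) * g x := by
    have hsub : ∫ x in a..b, (g x * g x - p.eval x * g x) =
        (∫ x in a..b, g x * g x) - ∫ x in a..b, p.eval x * g x :=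
      intervalIntegral.integral_sub ((hg.mul hg).intervalIntegrable_of_Icc hab)
        ((p.continuous.continuousOn.mul hg).intervalIntegrable_of_Icc hab)
    rw [h p, sub_zero] at hsub
    rw [← hsub]
    congr 1 with x
    ring
  have hbound : ∀ x ∈ uIoc a b, ‖(g x - p.eval x) * g x‖ ≤ δ * M := by
    intro x hx
    have hx' : x ∈ Icc a b := Ioc_subset_Icc_self (uIoc_of_le hab ▸ hx)
    rw [norm_mul]
    refine mul_le_mul ?_ (hM x hx') (norm_nonneg _) (by positivity)
    rw [Real.norm_eq_abs, abs_sub_comm]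
    exact (hp x hx').le
  calc dist (∫ x in a..b, g x * g x) 0 = ‖∫ x in a..b, (g x - p.eval x) * g x‖ := by
        rw [dist_zero_right, hsplit]
    _ ≤ δ * M * |b - a| := intervalIntegral.norm_integral_le_of_norm_le_const hbound
    _ ≤ ε := by
        rw [abs_of_nonneg (sub_nonneg.2 hab), mul_assoc, div_mul_eq_mul_div, div_le_iff₀ hC]
        nlinarith

theorem eqOn_zero_of_integral_mul_self_eq_zero {a b : ℝ} (hab : a < b) {g : ℝ → ℝ}
    (hg : ContinuousOn g (Icc a b)) (h : ∫ x in a..b, g x * g x = 0) :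
    EqOn g 0 (Icc a b) := by
  intro c hc
  by_contra hgc
  have hpos := intervalIntegral.integral_pos hab (hg.mul hg) (fun x _ => mul_self_nonneg (g x))
    ⟨c, hc, mul_self_pos.2 hgc⟩
  exact hpos.ne' h

theorem eqOn_zero_of_forall_integral_polynomial_mul_eq_zero {a b : ℝ} (hab : a < b)
    {g : ℝ → ℝ} (hg : ContinuousOn g (Icc a b))
    (h : ∀ p : ℝ[X], ∫ x in a..b, p.eval x * g x = 0) :
    EqOn g 0 (Icc a b) :=
  eqOn_zero_of_integral_mul_self_eq_zero hab hg
    (integral_mul_self_eq_zero_of_forall_integral_polynomial_mul_eq_zero hab.le hg h)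

/-- If `η` is continuous on `[0, T]` (with `T > 0`) and `∫₀ᵀ (s+1)^t η(s) ds = 0` for every
real `t ≥ T`, then `η` vanishes identically on `[0, T]`. -/
theorem vanishing_of_weighted_moments (T : ℝ) (hT : 0 < T) (η : ℝ → ℝ)
    (hη : ContinuousOn η (Set.Icc 0 T))
    (h : ∀ t : ℝ, T ≤ t → ∫ s in (0:ℝ)..T, (s + 1) ^ t * η s = 0) :
    ∀ s ∈ Set.Icc (0:ℝ) T, η s = 0 := by
  set g : ℝ → ℝ := fun s => (s + 1) ^ T * η s
  have hg : ContinuousOn g (Icc 0 T) :=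
    ((continuousOn_id.add continuousOn_const).rpow_const fun _ _ => Or.inr hT.le).mul hη
  have hmoments : ∀ n : ℕ, ∫ s in (0:ℝ)..T, (s + 1) ^ n * g s = 0 := by
    intro n
    refine (intervalIntegral.integral_congr fun s hs => ?_).trans
      (h (T + n) (le_add_of_nonneg_right n.cast_nonneg))
    have hs1 : 0 < s + 1 := by
      rw [uIcc_of_le hT.le] at hs
      linarith [hs.1]
    simp only [g, Real.rpow_add hs1, Real.rpow_natCast]
    ring
  have hg0 : EqOn g 0 (Icc 0 T) :=
    eqOn_zero_of_forall_integral_polynomial_mul_eq_zero hT hg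
      (integral_polynomial_mul_eq_zero_of_forall_integral_add_pow_mul_eq_zero
        (hg.intervalIntegrable_of_Icc hT.le) hmoments)
  intro s hs
  exact (mul_eq_zero.1 (hg0 hs)).resolve_left (Real.rpow_pos_of_pos (by linarith [hs.1]) T).ne'
end

section
/- Let T > 0. There is no differentiable function η : [0,∞) → ℝ with η(0) = 1 such that η(t) = 0 for all t ≥ T and η'(t) + ∫₀ᵗ (s+1)^t η(s) ds = 0 for all t ≥ T. In other words, for the memory kernel M(t,s) = (s+1)^t, no control v vanishing after time T can steer the memory ODE η' (t) + ∫₀ᵗ M(t,s) η(s) ds = v(t), η(0) = 1, to permanent rest on [T,∞). -/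
/-!
Once `η` is at rest, `η' = 0` there, so the equation leaves `∫₀ᵀ (s+1)^t η(s) ds = 0` for every
`t > T`. Taking `t = T + 1 + n` shows that `F(s) = (s+1)^(T+1) η(s)` is orthogonal on `[0,T]` to
every power `(s+1)^n`, hence to every polynomial. By Weierstrass approximation `∫₀ᵀ F² = 0`, so the
continuous function `F` vanishes on `[0,T]`, contradicting `F 0 = η 0 = 1`.
-/

open MeasureTheory intervalIntegral Set Polynomial Filter Topology

theorem integral_mul_self_eq_zero_of_forall_integral_mul_eval_eq_zero {a b : ℝ} (hab : a ≤ b)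
    {F : ℝ → ℝ} (hF : ContinuousOn F (Icc a b))
    (h : ∀ p : ℝ[X], ∫ x in a..b, F x * p.eval x = 0) :
    ∫ x in a..b, F x * F x = 0 := by
  obtain ⟨C, hC⟩ := isCompact_Icc.exists_bound_of_continuousOn hF
  have hFint : IntervalIntegrable F volume a b := hF.intervalIntegrable_of_Icc hab
  have hbound : ∀ δ > 0, |∫ x in a..b, F x * F x| ≤ C * δ * |b - a| := by
    intro δ hδ
    obtain ⟨p, hp⟩ := exists_polynomial_near_of_continuousOn a b F hF δ hδ
    have hsplit : ∫ x in a..b, F x * F x = ∫ x in a..b, F x * (F x - p.eval x) := by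
      simp_rw [mul_sub]
      rw [integral_sub (hFint.mul_continuousOn (by rwa [uIcc_of_le hab]))
        (hFint.mul_continuousOn p.continuous.continuousOn), h p, sub_zero]
    rw [hsplit, ← Real.norm_eq_abs]
    refine norm_integral_le_of_norm_le_const fun x hx => ?_
    have hx : x ∈ Icc a b := Ioc_subset_Icc_self (uIoc_of_le hab ▸ hx)
    rw [norm_mul, Real.norm_eq_abs (_ - _), abs_sub_comm]
    exact mul_le_mul (hC x hx) (hp x hx).le (abs_nonneg _) ((norm_nonneg _).trans (hC x hx))
  have hlim : Tendsto (fun δ => C * δ * |b - a|) (𝓝[>] 0) (𝓝 0) := by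
    have : Tendsto (fun δ => C * δ * |b - a|) (𝓝 0) (𝓝 (C * 0 * |b - a|)) :=
      ((continuous_const.mul continuous_id).mul continuous_const).tendsto 0
    simpa using this.mono_left nhdsWithin_le_nhds
  exact abs_nonpos_iff.1 (ge_of_tendsto hlim (eventually_nhdsWithin_of_forall hbound))

theorem eqOn_zero_of_forall_integral_mul_eval_eq_zero {a b : ℝ} (hab : a < b)
    {F : ℝ → ℝ} (hF : ContinuousOn F (Icc a b))
    (h : ∀ p : ℝ[X], ∫ x in a..b, F x * p.eval x = 0) :
    EqOn F 0 (Icc a b) := by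
  intro c hc
  by_contra hFc
  have hpos := integral_pos hab (hF.mul hF) (fun x _ => mul_self_nonneg (F x))
    ⟨c, hc, mul_self_pos.2 hFc⟩
  exact hpos.ne' (integral_mul_self_eq_zero_of_forall_integral_mul_eval_eq_zero hab.le hF h)

theorem integral_mul_eval_eq_zero_of_forall_integral_mul_pow_eq_zero {a b c : ℝ} {F : ℝ → ℝ}
    (hF : IntervalIntegrable F volume a b)
    (h : ∀ n : ℕ, ∫ x in a..b, F x * (x + c) ^ n = 0) (p : ℝ[X]) :
    ∫ x in a..b, F x * p.eval x = 0 := by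
  have hshift : ∀ q : ℝ[X], ∫ x in a..b, F x * q.eval (x + c) = 0 := by
    intro q
    simp_rw [eval_eq_sum_range, Finset.mul_sum]
    rw [integral_finsetSum fun i _ => hF.mul_continuousOn (by fun_prop)]
    refine Finset.sum_eq_zero fun i _ => ?_
    simp_rw [mul_left_comm (F _), intervalIntegral.integral_const_mul, h i, mul_zero]
  exact (intervalIntegral.integral_congr fun x _ => by simp).trans (hshift (p.comp (X - C c)))

theorem continuousOn_add_one_rpow (t : ℝ) : ContinuousOn (fun s : ℝ => (s + 1) ^ t) (Ici 0) :=
  ContinuousOn.rpow_const (f := fun s => s + 1) (by fun_prop) fun s hs =>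
    Or.inl (ne_of_gt (by linarith [mem_Ici.1 hs]))

theorem integral_kernel_mul_eq_zero_of_rest {K : ℝ → ℝ → ℝ} {η : ℝ → ℝ} {S : Set ℝ} {T t : ℝ}
    (hTt : T < t) (hrest : ∀ s, T ≤ s → η s = 0)
    (hint : IntervalIntegrable (fun s => K t s * η s) volume 0 T)
    (hode : derivWithin η S t + ∫ s in 0..t, K t s * η s = 0) :
    ∫ s in 0..T, K t s * η s = 0 := by
  have hderiv : derivWithin η S t = 0 := by
    have : η =ᶠ[𝓝 t] fun _ => 0 :=
      eventually_of_mem (Ioi_mem_nhds hTt) fun s hs => hrest s (le_of_lt hs)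
    rw [this.derivWithin_eq_of_nhds]
    simp
  have htail : EqOn (fun s => K t s * η s) (fun _ => 0) (uIcc T t) := fun s hs => by
    simp [hrest s (uIcc_of_le hTt.le ▸ hs).1]
  have htail_int : IntervalIntegrable (fun s => K t s * η s) volume T t :=
    (intervalIntegrable_const (c := 0)).congr (htail.symm.mono uIoc_subset_uIcc)
  rwa [hderiv, zero_add, ← integral_add_adjacent_intervals hint htail_int,
    intervalIntegral.integral_congr htail, intervalIntegral.integral_zero, add_zero] at hode

theorem no_permanent_rest_for_memory_ode_general (T : ℝ) :
    ¬ ∃ η : ℝ → ℝ, DifferentiableOn ℝ η (Set.Ici 0) ∧ η 0 = 1 ∧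
        (∀ t : ℝ, T ≤ t → η t = 0) ∧
        (∀ t : ℝ, T ≤ t →
          derivWithin η (Set.Ici 0) t + ∫ s in (0:ℝ)..t, (s + 1) ^ t * η s = 0) := by
  rintro ⟨η, hη, hη0, hrest, hode⟩
  have hT : 0 < T := by
    by_contra! hT
    simp [hrest 0 hT] at hη0
  have hηT : ContinuousOn η (Icc 0 T) := hη.continuousOn.mono Icc_subset_Ici_self
  have hkerη : ∀ t : ℝ, ContinuousOn (fun s => (s + 1) ^ t * η s) (Icc 0 T) := fun t =>
    ((continuousOn_add_one_rpow t).mono Icc_subset_Ici_self).mul hηT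
  set F : ℝ → ℝ := fun s => (s + 1) ^ (T + 1) * η s
  have hF : ContinuousOn F (Icc 0 T) := hkerη (T + 1)
  have hmoments : ∀ n : ℕ, ∫ s in (0:ℝ)..T, F s * (s + 1) ^ n = 0 := by
    intro n
    have htn : T < T + 1 + n := by linarith [n.cast_nonneg (α := ℝ)]
    refine (intervalIntegral.integral_congr fun s hs => ?_).trans
      (integral_kernel_mul_eq_zero_of_rest (K := fun t s => (s + 1) ^ t) htn hrest
        ((hkerη _).intervalIntegrable_of_Icc hT.le) (hode _ htn.le))
    have hs : 0 < s + 1 := by linarith [(uIcc_of_le hT.le ▸ hs).1]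
    simp only [F, Real.rpow_add hs, Real.rpow_natCast]
    ring
  have hF0 := eqOn_zero_of_forall_integral_mul_eval_eq_zero hT hF
    (integral_mul_eval_eq_zero_of_forall_integral_mul_pow_eq_zero
      (hF.intervalIntegrable_of_Icc hT.le) hmoments) (left_mem_Icc.2 hT.le)
  simp [F, hη0] at hF0

/-- For the memory kernel `M(t,s) = (s+1)^t`, no solution of the memory ODE starting from
`η(0) = 1` can be steered to permanent rest after time `T`: there is no differentiable
function `η : [0,∞) → ℝ` with `η 0 = 1`, `η t = 0` for all `t ≥ T`, and
`η'(t) + ∫₀ᵗ (s+1)^t η(s) ds = 0` for all `t ≥ T`. -/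
theorem no_permanent_rest_for_memory_ode (T : ℝ) (hT : 0 < T) :
    ¬ ∃ η : ℝ → ℝ, DifferentiableOn ℝ η (Set.Ici 0) ∧ η 0 = 1 ∧
        (∀ t : ℝ, T ≤ t → η t = 0) ∧
        (∀ t : ℝ, T ≤ t →
          derivWithin η (Set.Ici 0) t + ∫ s in (0:ℝ)..t, (s + 1) ^ t * η s = 0) :=
  no_permanent_rest_for_memory_ode_general T
end
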